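/- arXiv:1405.3421 — 3 statements merged into one kernel-verified Lean document; each statement's English description precedes it below -/
import Mathlib

section
/- Let ν ≥ 0, G_n, G_{pn} > 0 with G_{pn} ≥ G_n possibly distinct, r₀ ≥ 0, and let R_n(t) = r₀ e^{-νt}/(1 - G_n r₀ e_ν(t)) on [0,T_c) (with T_c as in the logistic blow-up time). Then for δ_p ≥ 0, the solution of R_p' = -νR_p + G_{pn} R_n(t) R_p, R_p(0) = δ_p, is R_p(t) = δ_p e^{-νt} / (1 - G_n r₀ e_ν(t))^{G_{pn}/G_n}, for t ∈ [0,T_c). -/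
/-- `e_ν(t) := (1 - e^{-νt})/ν` for `ν > 0`, `e_ν(t) := t` for `ν = 0`. -/
noncomputable def enu (ν t : ℝ) : ℝ :=
  if ν = 0 then t else (1 - Real.exp (-(ν*t)))/ν

lemma enu_zero (ν : ℝ) : enu ν 0 = 0 := by
  unfold enu
  split <;> simp

lemma enu_hasDerivAt (ν t : ℝ) : HasDerivAt (enu ν) (Real.exp (-(ν*t))) t := by
  unfold enu
  by_cases h : ν = 0
  · simp only [h, if_true]
    exact (hasDerivAt_id t).congr_deriv (by simp)
  · simp only [h, if_false]
    have h1 : HasDerivAt (fun s : ℝ => -(ν*s)) (-ν) t := by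
      exact (((hasDerivAt_id t).const_mul ν).neg).congr_deriv (by ring)
    have h2 : HasDerivAt (fun s : ℝ => Real.exp (-(ν*s)))
        (Real.exp (-(ν*t)) * (-ν)) t := (Real.hasDerivAt_exp _).comp t h1
    have h3 := (h2.const_sub 1).div_const ν
    refine h3.congr_deriv (Eq.symm ?_)
    field_simp

/-- With `R_n(t) = r₀ e^{-νt}/(1 - G_n r₀ e_ν(t))`, the solution of the linear
problem `R_p' = -νR_p + G_{pn} R_n(t) R_p`, `R_p(0) = δ_p`, is
`R_p(t) = δ_p e^{-νt}/(1 - G_n r₀ e_ν(t))^{G_{pn}/G_n}` on `[0,T_c)`,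
`T_c` being the maximal time on which `1 - G_n r₀ e_ν(t) > 0`. -/
theorem stmt14 (ν Gn Gpn r₀ δp : ℝ) (hν : 0 ≤ ν) (hGn : 0 < Gn) (hGpn : Gn ≤ Gpn)
    (hr : 0 ≤ r₀) (hδ : 0 ≤ δp)
    (Rn Rp : ℝ → ℝ)
    (hRn : ∀ t, Rn t = r₀ * Real.exp (-(ν*t)) / (1 - Gn * r₀ * enu ν t))
    (hRp : ∀ t, Rp t = δp * Real.exp (-(ν*t)) /
        (1 - Gn * r₀ * enu ν t) ^ (Gpn/Gn)) :
    Rp 0 = δp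
    ∧ ∀ t : ℝ, 0 ≤ t → 0 < 1 - Gn * r₀ * enu ν t →
        HasDerivAt Rp (-ν * Rp t + Gpn * Rn t * Rp t) t := by
  constructor
  · rw [hRp 0, enu_zero]
    simp
  · intro t ht0 ht
    set u : ℝ → ℝ := fun s => 1 - Gn * r₀ * enu ν s with hu_def
    have hUt : 0 < u t := ht
    set P := Gpn / Gn with hP
    have hu : HasDerivAt u (-(Gn*r₀) * Real.exp (-(ν*t))) t := by
      have := ((enu_hasDerivAt ν t).const_mul (Gn*r₀)).const_sub 1
      refine this.congr_deriv (Eq.symm ?_)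
      ring
    set g : ℝ → ℝ := fun s => δp * (Real.exp (-(ν*s)) * (u s) ^ (-P)) with hg_def
    have h1 : HasDerivAt (fun s : ℝ => Real.exp (-(ν*s)))
        (Real.exp (-(ν*t)) * (-ν)) t := by
      have h0 : HasDerivAt (fun s : ℝ => -(ν*s)) (-ν) t := by
        exact (((hasDerivAt_id t).const_mul ν).neg).congr_deriv (by ring)
      exact (Real.hasDerivAt_exp _).comp t h0
    have h2 := hu.rpow_const (p := -P) (Or.inl (ne_of_gt hUt))
    have hg := (h1.mul h2).const_mul δp
    have hev : ∀ᶠ s in nhds t, 0 < u s :=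
      hu.continuousAt (Ioi_mem_nhds hUt)
    have heq : Rp =ᶠ[nhds t] g := by
      filter_upwards [hev] with s hs
      rw [hRp s, hg_def]
      simp only
      rw [Real.rpow_neg hs.le]
      ring
    have hRpt : Rp t = δp * (Real.exp (-(ν*t)) * (u t) ^ (-P)) := by
      rw [hRp t, Real.rpow_neg hUt.le]; ring
    have hmain := hg.congr_of_eventuallyEq heq
    refine hmain.congr_deriv (Eq.symm ?_)
    rw [hRpt, hRn t]
    have hsub : (u t) ^ (-P - 1) = (u t) ^ (-P) / u t := by
      rw [Real.rpow_sub hUt, Real.rpow_one]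
    rw [hsub]
    have hPGn : Gpn = P * Gn := (div_mul_cancel₀ Gpn (ne_of_gt hGn)).symm
    rw [hPGn]
    field_simp
    ring
end

section
/- For vectors h, k ∈ R^d with h ≠ 0, the operator norm of the bilinear map h^⊥ × (k-h)^⊥ → k^⊥, (a,b) ↦ ((k-h)·a) L_k b (where L_k is orthogonal projection onto k^⊥), is at most |h ∧ k|/|h| = |k| sin θ(h,k). -/
open scoped BigOperators

/-- Euclidean norm of a vector of `ℂ^d`. -/
noncomputable def cnorm (d : ℕ) (a : Fin d → ℂ) : ℝ :=
  Real.sqrt (∑ i, ‖a i‖ ^ 2)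

/-- Euclidean norm of a vector of `ℝ^d`. -/
noncomputable def rnorm (d : ℕ) (h : Fin d → ℝ) : ℝ :=
  Real.sqrt (∑ i, (h i) ^ 2)

/-- Orthogonal projection `L_k` of `ℂ^d` onto `k^⊥` (for real `k`). -/
noncomputable def projPerp (d : ℕ) (k : Fin d → ℝ) (b : Fin d → ℂ) : Fin d → ℂ :=
  fun i => b i - ((∑ j, (k j : ℂ) * b j) / ((∑ j, (k j) ^ 2 : ℝ) : ℂ)) * (k i : ℂ)

open scoped ComplexInnerProductSpace

lemma aux_pyth {E : Type*} [NormedAddCommGroup E] [InnerProductSpace ℂ E]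
    (K b : E) :
    ‖b - ((inner ℂ K b : ℂ) / ((‖K‖ : ℂ) ^ 2)) • K‖ ^ 2
      = ‖b‖ ^ 2 - ‖(inner ℂ K b : ℂ)‖ ^ 2 / ‖K‖ ^ 2 := by
  rcases eq_or_ne K 0 with rfl | hK
  · simp
  set t : ℂ := (inner ℂ K b : ℂ) / ((‖K‖ : ℂ) ^ 2) with ht
  have hKn : ((‖K‖ : ℂ) ^ 2) ≠ 0 := by
    simpa using pow_ne_zero 2 ((Complex.ofReal_ne_zero).mpr (norm_ne_zero_iff.mpr hK))
  have horth : (inner ℂ (t • K) (b - t • K) : ℂ) = 0 := by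
    rw [inner_smul_left, inner_sub_right, inner_smul_right]
    have : (inner ℂ K K : ℂ) = ((‖K‖ : ℂ) ^ 2) := by
      rw [inner_self_eq_norm_sq_to_K]; norm_num
    rw [this, ht]
    have hK0' : (‖K‖ : ℂ) ≠ 0 := by exact_mod_cast norm_ne_zero_iff.mpr hK
    field_simp
    simp
  have hsum := norm_add_sq_eq_norm_sq_add_norm_sq_of_inner_eq_zero _ _ horth
  have hbb : t • K + (b - t • K) = b := by abel
  rw [hbb] at hsum
  have hts : ‖t • K‖ * ‖t • K‖ = ‖(inner ℂ K b : ℂ)‖ ^ 2 / ‖K‖ ^ 2 := by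
    rw [norm_smul, ht, norm_div]
    have h1 : ‖((‖K‖ : ℂ) ^ 2)‖ = ‖K‖ ^ 2 := by
      simp [abs_of_nonneg (norm_nonneg K)]
    rw [h1]
    have hK0 : ‖K‖ ≠ 0 := norm_ne_zero_iff.mpr hK
    field_simp
  rw [hts] at hsum
  nlinarith [hsum]

lemma aux_cs {E : Type*} [NormedAddCommGroup E] [InnerProductSpace ℂ E]
    (H K a : E) (hHa : (inner ℂ H a : ℂ) = 0) :
    ‖(inner ℂ K a : ℂ)‖ ≤ Real.sqrt (‖K‖ ^ 2 - ‖(inner ℂ H K : ℂ)‖ ^ 2 / ‖H‖ ^ 2) * ‖a‖ := by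
  set s : ℂ := (inner ℂ H K : ℂ) / ((‖H‖ : ℂ) ^ 2) with hs
  have h1 : (inner ℂ (K - s • H) a : ℂ) = inner ℂ K a := by
    rw [inner_sub_left, inner_smul_left, hHa, mul_zero, sub_zero]
  have h2 := aux_pyth H K
  have h3 : ‖K - s • H‖ = Real.sqrt (‖K‖ ^ 2 - ‖(inner ℂ H K : ℂ)‖ ^ 2 / ‖H‖ ^ 2) := by
    rw [← h2, Real.sqrt_sq (norm_nonneg _)]
  rw [← h1, ← h3]
  exact norm_inner_le_norm _ _

lemma cnorm_eq (d : ℕ) (a : Fin d → ℂ) :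
    cnorm d a = ‖(WithLp.equiv 2 (Fin d → ℂ)).symm a‖ := by
  rw [EuclideanSpace.norm_eq]
  simp [cnorm, WithLp.equiv_symm_apply, PiLp.toLp_apply]

lemma rnorm_eq (d : ℕ) (v : Fin d → ℝ) :
    rnorm d v = ‖(WithLp.equiv 2 (Fin d → ℝ)).symm v‖ := by
  rw [EuclideanSpace.norm_eq]
  simp [rnorm, WithLp.equiv_symm_apply, PiLp.toLp_apply, sq_abs]

lemma norm_real_complex (d : ℕ) (v : Fin d → ℝ) :
    ‖(WithLp.equiv 2 (Fin d → ℂ)).symm (fun i => (v i : ℂ))‖ = rnorm d v := by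
  rw [EuclideanSpace.norm_eq]
  simp [rnorm, WithLp.equiv_symm_apply, PiLp.toLp_apply, sq_abs]

lemma inner_real_complex (d : ℕ) (v : Fin d → ℝ) (a : Fin d → ℂ) :
    (inner ℂ ((WithLp.equiv 2 (Fin d → ℂ)).symm (fun i => (v i : ℂ)))
      ((WithLp.equiv 2 (Fin d → ℂ)).symm a) : ℂ) = ∑ i, (v i : ℂ) * a i := by
  rw [PiLp.inner_apply]
  simp [RCLike.inner_apply, Complex.conj_ofReal, WithLp.equiv_symm_apply, PiLp.toLp_apply]
  exact Finset.sum_congr rfl (fun i _ => mul_comm _ _)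

lemma cnorm_smul (d : ℕ) (c : ℂ) (p : Fin d → ℂ) :
    cnorm d (fun i => c * p i) = ‖c‖ * cnorm d p := by
  unfold cnorm
  simp only [map_mul, norm_mul, mul_pow, ← Finset.mul_sum]
  rw [Real.sqrt_mul (by positivity), Real.sqrt_sq (norm_nonneg c)]

lemma projPerp_eq (d : ℕ) (k : Fin d → ℝ) (b : Fin d → ℂ) :
    (WithLp.equiv 2 (Fin d → ℂ)).symm (projPerp d k b)
      = (WithLp.equiv 2 (Fin d → ℂ)).symm b
        - ((inner ℂ ((WithLp.equiv 2 (Fin d → ℂ)).symm (fun i => (k i : ℂ)))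
              ((WithLp.equiv 2 (Fin d → ℂ)).symm b) : ℂ)
            / ((‖(WithLp.equiv 2 (Fin d → ℂ)).symm (fun i => (k i : ℂ))‖ : ℂ) ^ 2))
          • (WithLp.equiv 2 (Fin d → ℂ)).symm (fun i => (k i : ℂ)) := by
  have hn : ((‖(WithLp.equiv 2 (Fin d → ℂ)).symm (fun i => (k i : ℂ))‖ : ℂ) ^ 2)
      = ((∑ j, (k j) ^ 2 : ℝ) : ℂ) := by
    rw [norm_real_complex, ← Complex.ofReal_pow]
    norm_cast
    exact Real.sq_sqrt (by positivity)
  rw [inner_real_complex, hn]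
  ext i
  simp [projPerp, WithLp.equiv_symm_apply, PiLp.toLp_apply, PiLp.sub_apply, PiLp.smul_apply, smul_eq_mul]

/-- For `h ≠ 0`, the bilinear map `h^⊥ × (k-h)^⊥ → k^⊥`,
`(a,b) ↦ ((k-h)·a) L_k b`, has operator norm at most
`|h ∧ k|/|h| = |k| sin θ(h,k)`, where `|h ∧ k| = √(|h|²|k|² - (h·k)²)`. -/
theorem stmt15 (d : ℕ) (h k : Fin d → ℝ) (hh : h ≠ 0)
    (a b : Fin d → ℂ)
    (ha : ∑ i, (h i : ℂ) * a i = 0)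
    (hb : ∑ i, ((k i - h i : ℝ) : ℂ) * b i = 0) :
    cnorm d (fun i => (∑ j, ((k j - h j : ℝ) : ℂ) * a j) * projPerp d k b i)
      ≤ Real.sqrt ((rnorm d h)^2 * (rnorm d k)^2 - (∑ i, h i * k i)^2) / rnorm d h
          * cnorm d a * cnorm d b
    ∧ Real.sqrt ((rnorm d h)^2 * (rnorm d k)^2 - (∑ i, h i * k i)^2) / rnorm d h
        = rnorm d k *
          Real.sin (InnerProductGeometry.angle
            ((EuclideanSpace.equiv (Fin d) ℝ).symm h)
            ((EuclideanSpace.equiv (Fin d) ℝ).symm k)) := by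
  set S : ℝ := ∑ i, h i * k i with hS
  set H : ℝ := rnorm d h with hHdef
  set Kn : ℝ := rnorm d k with hKdef
  set Hc : EuclideanSpace ℂ (Fin d) :=
    (WithLp.equiv 2 (Fin d → ℂ)).symm (fun i => (h i : ℂ)) with hHc
  set Kc : EuclideanSpace ℂ (Fin d) :=
    (WithLp.equiv 2 (Fin d → ℂ)).symm (fun i => (k i : ℂ)) with hKc
  set Ac : EuclideanSpace ℂ (Fin d) := (WithLp.equiv 2 (Fin d → ℂ)).symm a with hAc
  set Bc : EuclideanSpace ℂ (Fin d) := (WithLp.equiv 2 (Fin d → ℂ)).symm b with hBc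
  clear_value S H Kn Hc Kc Ac Bc
  -- basic norms
  have hnH : ‖Hc‖ = H := by rw [hHc, hHdef]; exact norm_real_complex d h
  have hnK : ‖Kc‖ = Kn := by rw [hKc, hKdef]; exact norm_real_complex d k
  have hHpos : 0 < H := by
    obtain ⟨i, hi⟩ := Function.ne_iff.mp hh
    have hpos : 0 < ∑ i, (h i) ^ 2 :=
      Finset.sum_pos' (fun j _ => sq_nonneg _) ⟨i, Finset.mem_univ i, by simpa [sq_abs] using pow_pos (abs_pos.mpr hi) 2⟩
    rw [hHdef, rnorm]
    exact Real.sqrt_pos.mpr hpos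
  -- Cauchy-Schwarz for the real vectors
  have hinnerHK : (inner ℂ Hc Kc : ℂ) = ((S : ℝ) : ℂ) := by
    rw [hHc, hKc, inner_real_complex, hS]
    push_cast
    rfl
  have hCS : S ^ 2 ≤ H ^ 2 * Kn ^ 2 := by
    have := norm_inner_le_norm (𝕜 := ℂ) Hc Kc
    rw [hinnerHK, hnH, hnK] at this
    have habs : |S| ≤ H * Kn := by simpa using this
    nlinarith [abs_nonneg S, sq_abs S]
  -- the scalar factor
  have hnA : ‖Ac‖ = cnorm d a := by rw [hAc, ← cnorm_eq]
  have hnB : ‖Bc‖ = cnorm d b := by rw [hBc, ← cnorm_eq]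
  have hscal : (∑ j, ((k j - h j : ℝ) : ℂ) * a j) = (inner ℂ Kc Ac : ℂ) := by
    rw [hKc, hAc, inner_real_complex]
    push_cast
    simp [sub_mul, Finset.sum_sub_distrib, ha]
  have key1 : ‖(inner ℂ Kc Ac : ℂ)‖ ≤
      Real.sqrt (H ^ 2 * Kn ^ 2 - S ^ 2) / H * cnorm d a := by
    have h1 := aux_cs Hc Kc Ac (by rw [hHc, hAc, inner_real_complex]; exact ha)
    rw [hinnerHK, hnH, hnK] at h1
    have hnormS : ‖((S : ℝ) : ℂ)‖ ^ 2 = S ^ 2 := by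
      simp [sq_abs]
    rw [hnormS] at h1
    have hEq : Real.sqrt (Kn ^ 2 - S ^ 2 / H ^ 2)
        = Real.sqrt (H ^ 2 * Kn ^ 2 - S ^ 2) / H := by
      have hrw : Kn ^ 2 - S ^ 2 / H ^ 2 = (H ^ 2 * Kn ^ 2 - S ^ 2) / H ^ 2 := by
        field_simp
      rw [hrw, Real.sqrt_div (by nlinarith), Real.sqrt_sq hHpos.le]
    rw [hEq, hnA] at h1
    simpa using h1
  have key2 : cnorm d (projPerp d k b) ≤ cnorm d b := by
    have h2 := aux_pyth Kc Bc
    have hP : cnorm d (projPerp d k b)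
        = ‖Bc - ((inner ℂ Kc Bc : ℂ) / ((‖Kc‖ : ℂ) ^ 2)) • Kc‖ := by
      rw [cnorm_eq, projPerp_eq, ← hKc, ← hBc]
    have hq : 0 ≤ ‖(inner ℂ Kc Bc : ℂ)‖ ^ 2 / ‖Kc‖ ^ 2 := by positivity
    have hle : ‖Bc - ((inner ℂ Kc Bc : ℂ) / ((‖Kc‖ : ℂ) ^ 2)) • Kc‖ ^ 2 ≤ ‖Bc‖ ^ 2 := by
      rw [h2]; linarith [hq]
    rw [hP, ← hnB]
    calc ‖Bc - ((inner ℂ Kc Bc : ℂ) / ((‖Kc‖ : ℂ) ^ 2)) • Kc‖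
        = Real.sqrt (‖Bc - ((inner ℂ Kc Bc : ℂ) / ((‖Kc‖ : ℂ) ^ 2)) • Kc‖ ^ 2) :=
          (Real.sqrt_sq (norm_nonneg _)).symm
      _ ≤ Real.sqrt (‖Bc‖ ^ 2) := Real.sqrt_le_sqrt hle
      _ = ‖Bc‖ := Real.sqrt_sq (norm_nonneg _)
  constructor
  · have hLHS : cnorm d (fun i => (∑ j, ((k j - h j : ℝ) : ℂ) * a j) * projPerp d k b i)
        = ‖(inner ℂ Kc Ac : ℂ)‖ * cnorm d (projPerp d k b) := by
      rw [cnorm_smul, hscal]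
    rw [hLHS]
    have hnn : 0 ≤ cnorm d (projPerp d k b) := Real.sqrt_nonneg _
    have hnn2 : 0 ≤ Real.sqrt (H ^ 2 * Kn ^ 2 - S ^ 2) / H * cnorm d a := by
      exact mul_nonneg (div_nonneg (Real.sqrt_nonneg _) hHpos.le) (Real.sqrt_nonneg _)
    calc ‖(inner ℂ Kc Ac : ℂ)‖ * cnorm d (projPerp d k b)
        ≤ (Real.sqrt (H ^ 2 * Kn ^ 2 - S ^ 2) / H * cnorm d a) * cnorm d b :=
          mul_le_mul key1 key2 hnn hnn2
      _ = Real.sqrt (H ^ 2 * Kn ^ 2 - S ^ 2) / H * cnorm d a * cnorm d b := by ring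
  · set hr := (EuclideanSpace.equiv (Fin d) ℝ).symm h with hhr
    set kr := (EuclideanSpace.equiv (Fin d) ℝ).symm k with hkr
    clear_value hr kr
    have hinr : (inner ℝ hr kr : ℝ) = S := by
      rw [PiLp.inner_apply, hS]
      simp [RCLike.inner_apply, hhr, hkr, EuclideanSpace.equiv]
      exact Finset.sum_congr rfl (fun i _ => mul_comm _ _)
    have hnhr : ‖hr‖ = H := by
      rw [EuclideanSpace.norm_eq, hHdef, rnorm]
      simp [hhr, EuclideanSpace.equiv, sq_abs]
    have hnkr : ‖kr‖ = Kn := by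
      rw [EuclideanSpace.norm_eq, hKdef, rnorm]
      simp [hkr, EuclideanSpace.equiv, sq_abs]
    have hangle : InnerProductGeometry.angle hr kr = Real.arccos (S / (H * Kn)) := by
      rw [InnerProductGeometry.angle, hinr, hnhr, hnkr]
    rw [hangle, Real.sin_arccos]
    have hKnn : 0 ≤ Kn := by rw [hKdef, rnorm]; exact Real.sqrt_nonneg _
    rcases eq_or_lt_of_le hKnn with hK0 | hKpos
    · have h0 : S ^ 2 ≤ 0 := by
        have h00 := hCS
        rw [← hK0] at h00
        simpa using h00
      have hS0 : S = 0 := sq_eq_zero_iff.mp (le_antisymm h0 (sq_nonneg S))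
      rw [← hK0, hS0]
      simp
    · have hrw : 1 - (S / (H * Kn)) ^ 2 = (H ^ 2 * Kn ^ 2 - S ^ 2) / (H * Kn) ^ 2 := by
        field_simp
      rw [hrw, Real.sqrt_div (by linarith [hCS]), Real.sqrt_sq (mul_pos hHpos hKpos).le]
      field_simp
end

section
/- Suppose for each real p > d/2 + 1 the NS Cauchy problem in H^p has a unique maximal solution u_p on [0,T_p), and the blow-up criterion holds: if T_p < ∞ then limsup_{t→T_p⁻} ‖u_p(t)‖_n = +∞ for every d/2+1 < n ≤ p. If p ≤ q (both > d/2+1) and every H^q-solution is an H^p-solution, then T_q = T_p and u_q = u_p. -/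
open scoped ENNReal

/-- Abstract version of Step 3 in Appendix B: given, for each Sobolev order
`p > d/2 + 1`, a unique maximal solution `u_p` on `[0,T_p)` of the order-`p`
NS Cauchy problem (maximality: every solution is a restriction of `u_p`),
the blow-up criterion (if `T_p < ∞` then `limsup_{t→T_p⁻} ‖u_p(t)‖_n = ∞`
for every `d/2+1 < n ≤ p`), local boundedness of `t ↦ ‖u_p(t)‖_p` before `T_p`,
and the fact that every `H^q`-solution is an `H^p`-solution for `p ≤ q`;
then `T_q = T_p` and `u_q = u_p`. -/
theorem stmt16 {V : Type*} (d : ℕ)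
    (N : ℝ → V → ℝ≥0∞)
    (hN : ∀ (p q : ℝ) (v : V), p ≤ q → N p v ≤ N q v)
    (Sol : ℝ → (ℝ → V) → ℝ≥0∞ → Prop)
    (uu : ℝ → ℝ → V) (TT : ℝ → ℝ≥0∞)
    (hTpos : ∀ p : ℝ, 0 < TT p)
    (hsol : ∀ p : ℝ, (d:ℝ)/2 + 1 < p → Sol p (uu p) (TT p))
    (hmax : ∀ p : ℝ, (d:ℝ)/2 + 1 < p → ∀ (u' : ℝ → V) (T' : ℝ≥0∞), Sol p u' T' →
        T' ≤ TT p ∧ ∀ t : ℝ, 0 ≤ t → ENNReal.ofReal t < T' → u' t = uu p t)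
    (hblow : ∀ p : ℝ, (d:ℝ)/2 + 1 < p → TT p ≠ ⊤ →
        ∀ n : ℝ, (d:ℝ)/2 + 1 < n → n ≤ p →
        Filter.limsup (fun t : ℝ => N n (uu p t))
          (nhdsWithin (TT p).toReal (Set.Iio (TT p).toReal)) = ⊤)
    (hbdd : ∀ p : ℝ, (d:ℝ)/2 + 1 < p → ∀ T' : ℝ, 0 ≤ T' →
        ENNReal.ofReal T' < TT p →
        ∃ M : ℝ≥0∞, M ≠ ⊤ ∧ ∀ t : ℝ, 0 ≤ t → t ≤ T' → N p (uu p t) ≤ M)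
    (hdown : ∀ p q : ℝ, (d:ℝ)/2 + 1 < p → p ≤ q →
        ∀ (u' : ℝ → V) (T' : ℝ≥0∞), Sol q u' T' → Sol p u' T')
    (p q : ℝ) (hp : (d:ℝ)/2 + 1 < p) (hpq : p ≤ q) :
    TT q = TT p ∧
      ∀ t : ℝ, 0 ≤ t → ENNReal.ofReal t < TT q → uu q t = uu p t := by
  have hq : (d:ℝ)/2 + 1 < q := lt_of_lt_of_le hp hpq
  have hSp : Sol p (uu q) (TT q) := hdown p q hp hpq _ _ (hsol q hq)
  obtain ⟨hle, heq⟩ := hmax p hp (uu q) (TT q) hSp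
  refine ⟨le_antisymm hle ?_, fun t ht hlt => heq t ht hlt⟩
  by_contra hlt
  push_neg at hlt
  have hne : TT q ≠ ⊤ := hlt.ne_top
  have hblowq := hblow q hq hne p hp hpq
  set T' : ℝ := (TT q).toReal with hT'
  have hT'pos : 0 < T' := ENNReal.toReal_pos (hTpos q).ne' hne
  have hofT' : ENNReal.ofReal T' = TT q := ENNReal.ofReal_toReal hne
  obtain ⟨M, hM, hMb⟩ := hbdd p hp T' hT'pos.le (hofT' ▸ hlt)
  have hev : ∀ᶠ t in nhdsWithin T' (Set.Iio T'),
      N p (uu q t) ≤ M := by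
    have h1 : ∀ᶠ t in nhdsWithin T' (Set.Iio T'), (0:ℝ) < t :=
      eventually_nhdsWithin_of_eventually_nhds (eventually_gt_nhds hT'pos)
    have h2 : ∀ᶠ t in nhdsWithin T' (Set.Iio T'), t ∈ Set.Iio T' :=
      eventually_mem_nhdsWithin
    filter_upwards [h1, h2] with t ht0 htT
    have htlt : ENNReal.ofReal t < TT q :=
      (ENNReal.ofReal_lt_iff_lt_toReal ht0.le hne).mpr htT
    rw [heq t ht0.le htlt]
    exact hMb t ht0.le (le_of_lt htT)
  have : Filter.limsup (fun t : ℝ => N p (uu q t))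
      (nhdsWithin T' (Set.Iio T')) ≤ M := Filter.limsup_le_of_le (by isBoundedDefault) hev
  rw [hblowq] at this
  exact hM (top_le_iff.mp this)
end
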